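/- arXiv:2505.19809 — 4 statements merged into one kernel-verified Lean document; each statement's English description precedes it below -/
import Mathlib

section
/- Let G be a finite group acting measurably on spaces X and Y, and let (x, y) be a pair of random variables with values in X × Y such that the conditional distribution satisfies P(y ∈ B | x = a) = P(y ∈ g·B | x = g·a) for all g ∈ G and the marginal of x is G-invariant. Then the conditional expectation map f(a) = E[y | x = a] is G-equivariant: E[y | x = g·a] = g · E[y | x = a] for all g ∈ G and almost all a ∈ X. -/
open MeasureTheory ProbabilityTheory

/-- If the law of `x` is `G`-invariant and the conditional
distribution kernel `κ` of `y` given `x` is `G`-equivariant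
(`κ (g • a) = (κ a).map (ρ g)`), then the conditional expectation map
`a ↦ ∫ b ∂(κ a)` is `G`-equivariant (almost everywhere). -/
theorem conditional_expectation_equivariant
    {G : Type*} [Group G]
    {X : Type*} [MeasurableSpace X] [MulAction G X]
    {Y : Type*} [MeasurableSpace Y] [NormedAddCommGroup Y] [NormedSpace ℝ Y]
    [BorelSpace Y] [CompleteSpace Y]
    (μ : Measure X) [IsProbabilityMeasure μ]
    (κ : ProbabilityTheory.Kernel X Y) [ProbabilityTheory.IsMarkovKernel κ]
    (ρ : G →* (Y ≃L[ℝ] Y))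
    (hsmul_meas : ∀ g : G, Measurable (fun a : X => g • a))
    (hρ_meas : ∀ g : G, Measurable (ρ g))
    (hμ_inv : ∀ g : G, μ.map (fun a : X => g • a) = μ)
    (hκ_equiv : ∀ (g : G) (a : X), κ (g • a) = (κ a).map (ρ g))
    (hint : ∀ a : X, Integrable (fun b : Y => b) (κ a)) :
    ∀ g : G, ∀ᵐ a ∂μ, (∫ b, b ∂(κ (g • a))) = ρ g (∫ b, b ∂(κ a)) := by
  intro g
  filter_upwards with a
  have he : MeasurableEmbedding (⇑(ρ g)) := (ρ g).toHomeomorph.measurableEmbedding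
  rw [hκ_equiv g a, he.integral_map]
  exact (ρ g : Y →L[ℝ] Y).integral_comp_comm (hint a)
end

section
/- Let G' be a finite group acting measurably on X, with the law of x being G'-invariant, and let A ⊆ X be measurable with P(x ∈ A) > 0. Define Z = (1/|G'|) Σ_{g ∈ G'} 1_{g⁻¹·A}(x) − P(x ∈ A). Then Var(Z) = [P(x∈A)(1 − P(x∈A)) + (|G'| − 1)(γ_{G'}(A) − P(x∈A)) P(x∈A)] / |G'|, where γ_{G'}(A) = (1/(|G'| − 1)) Σ_{g ≠ e} P(x ∈ A ∩ g·A)/P(x ∈ A). -/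
/-! The variance of a sum of indicators is the sum of their pairwise covariances
`μ(g⁻¹A ∩ h⁻¹A) − p²`. Invariance of `μ` turns `μ(g⁻¹A ∩ h⁻¹A)` into `μ(A ∩ (h g⁻¹)A)`, so for each
`g` the sum over `h` is `∑ₖ μ(A ∩ kA) − n p²`; there the term `k = 1` is `p` and the others add up
to `(n − 1) γ p`. -/

open MeasureTheory Pointwise ProbabilityTheory

lemma MeasureTheory.memLp_indicator_one {Ω : Type*} [MeasurableSpace Ω] {μ : Measure Ω}
    [IsFiniteMeasure μ] {s : Set Ω} (hs : MeasurableSet s) (p : ENNReal) :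
    MemLp (s.indicator (1 : Ω → ℝ)) p μ :=
  memLp_indicator_const p hs 1 (.inr (measure_ne_top μ s))

lemma ProbabilityTheory.covariance_indicator_one {Ω : Type*} [MeasurableSpace Ω] {μ : Measure Ω}
    [IsProbabilityMeasure μ] {s t : Set Ω} (hs : MeasurableSet s) (ht : MeasurableSet t) :
    cov[s.indicator 1, t.indicator 1; μ] = μ.real (s ∩ t) - μ.real s * μ.real t := by
  rw [covariance_eq_sub (memLp_indicator_one hs 2) (memLp_indicator_one ht 2),
    ← Set.inter_indicator_one, integral_indicator_one (hs.inter ht), integral_indicator_one hs,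
    integral_indicator_one ht]

namespace MeasureTheory

variable {G α : Type*} [Group G] [MulAction G α] [MeasurableSpace α] {μ : Measure α}
  [SMulInvariantMeasure G α μ]

lemma measureReal_smul (g : G) (s : Set α) : μ.real (g • s) = μ.real s := by
  rw [measureReal_def, measure_smul, measureReal_def]

lemma measureReal_inv_smul_inter_inv_smul (g h : G) (s : Set α) :
    μ.real (g⁻¹ • s ∩ h⁻¹ • s) = μ.real (s ∩ (h * g⁻¹) • s) := by
  rw [measureReal_def, measure_inter_inv_smul, smul_smul, Set.inter_comm, measureReal_def]

theorem variance_sum_indicator_inv_smul [Fintype G] [MeasurableConstSMul G α]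
    [IsProbabilityMeasure μ] {s : Set α} (hs : MeasurableSet s) :
    Var[fun x ↦ ∑ g : G, (g⁻¹ • s).indicator 1 x; μ] =
      Fintype.card G * ∑ k : G, (μ.real (s ∩ k • s) - μ.real s ^ 2) := by
  have hmeas (g : G) : MeasurableSet (g⁻¹ • s) := hs.const_smul g⁻¹
  rw [variance_fun_sum fun g ↦ memLp_indicator_one (hmeas g) 2]
  have hcov (g h : G) : cov[(g⁻¹ • s).indicator 1, (h⁻¹ • s).indicator 1; μ] =
      μ.real (s ∩ (h * g⁻¹) • s) - μ.real s ^ 2 := by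
    rw [covariance_indicator_one (hmeas g) (hmeas h), measureReal_inv_smul_inter_inv_smul,
      measureReal_smul, measureReal_smul, sq]
  calc ∑ g : G, ∑ h : G, cov[(g⁻¹ • s).indicator 1, (h⁻¹ • s).indicator 1; μ]
      = ∑ g : G, ∑ k : G, (μ.real (s ∩ k • s) - μ.real s ^ 2) := by
        refine Fintype.sum_congr _ _ fun g ↦ ?_
        simp_rw [hcov]
        exact Equiv.sum_comp (Equiv.mulRight g⁻¹) fun k ↦ μ.real (s ∩ k • s) - μ.real s ^ 2
    _ = _ := by rw [Finset.sum_const, Finset.card_univ, nsmul_eq_mul]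

end MeasureTheory

/-- Variance of the group-averaged indicator:
`Z = (1/|G'|) ∑_g 1_{g⁻¹•A}(x) − P(x∈A)` has
`Var(Z) = [p(1−p) + (|G'|−1)(γ−p)p] / |G'|` where `p = P(x∈A)` and `γ`
is the symmetry index of `A`. -/
theorem variance_group_averaged_indicator
    {G' : Type*} [Group G'] [Fintype G'] [DecidableEq G']
    (hcard : 1 < Fintype.card G')
    {X : Type*} [MeasurableSpace X] [MulAction G' X]
    (μ : Measure X) [IsProbabilityMeasure μ]
    (hsmul : ∀ g : G', Measurable (fun a : X => g • a))
    (hμ : ∀ g : G', μ.map (fun a : X => g • a) = μ)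
    (A : Set X) (hA : MeasurableSet A) (hApos : 0 < (μ A).toReal) :
    let n : ℝ := Fintype.card G'
    let p : ℝ := (μ A).toReal
    let γ : ℝ := (1 / (n - 1)) *
      ∑ g ∈ Finset.univ.filter (fun g : G' => g ≠ 1),
        (μ (A ∩ g • A)).toReal / p
    let Z : X → ℝ := fun a =>
      (1 / n) * ∑ g : G', (g⁻¹ • A).indicator (fun _ => (1 : ℝ)) a - p
    variance Z μ = (p * (1 - p) + (n - 1) * (γ - p) * p) / n := by
  intro n p γ Z
  have : MeasurableConstSMul G' X := ⟨hsmul⟩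
  have : SMulInvariantMeasure G' X μ :=
    ⟨fun g _ hs ↦ by rw [← Measure.map_apply (hsmul g) hs, hμ g]⟩
  have hn : n - 1 ≠ 0 := sub_ne_zero.2 (Nat.one_lt_cast.2 hcard).ne'
  have hp : p ≠ 0 := hApos.ne'
  have hVar : variance Z μ = (1 / n) ^ 2 * (n * ∑ k : G', (μ.real (A ∩ k • A) - p ^ 2)) := by
    rw [variance_sub_const (by fun_prop (disch := exact hA.const_smul _)) p, variance_const_mul]
    exact congrArg _ (variance_sum_indicator_inv_smul hA)
  have hsplit : ∑ k : G', μ.real (A ∩ k • A) = p + (n - 1) * γ * p := by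
    rw [← Finset.add_sum_erase _ _ (Finset.mem_univ 1), one_smul, Set.inter_self,
      ← Finset.filter_ne']
    simp only [γ, ← Finset.sum_div]
    field_simp
    rfl
  rw [hVar, Finset.sum_sub_distrib, hsplit, Finset.sum_const, Finset.card_univ, nsmul_eq_mul]
  field_simp
  ring
end

section
/- Let X, Y be measurable spaces with G-invariant probability measures μ_X, μ_Y for a finite group G, and let D, D̂ : L²(μ_Y) → L²(μ_X) be bounded linear G-equivariant operators (intertwining the translation representations). Let h ∈ L²(μ_Y; Z) for a Hilbert space Z. Then for every measurable A ⊆ X with μ_X(A) > 0 and subgroup G' ≤ G, if h is fixed by the G'-action on L²(μ_Y; Z), then ‖E_x[1_A(x) ((D − D̂)h)(x)]‖_Z ≤ ‖D − D̂‖_op · ‖h‖_{L²} · sqrt(μ_X(A)) · sqrt((1 + (|G'|−1)γ_{G'}(A))/|G'|), where γ_{G'}(A) is the symmetry index of A. -/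
/-!
The function `u = (D - D̂) h` is a.e. invariant under `G'`, so by invariance of `μX` its integral
over every translate `g • A`, `g ∈ G'`, equals its integral over `A`. Averaging over `G'` gives
`|G'| ∫_A u = ∫ ψ u` with `ψ = ∑_{g ∈ G'} 1_{g • A}`, and Cauchy–Schwarz bounds this by
`‖ψ‖₂ ‖u‖₂`. Invariance of `μX` again gives
`‖ψ‖₂² = ∑_{g, g'} μX (g • A ∩ g' • A) = |G'| ∑_g μX (A ∩ g • A) = |G'| μX(A) (1 + (|G'| - 1) γ)`,
and `‖u‖₂ ≤ ‖D - D̂‖ ‖h‖`.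
-/

open MeasureTheory Pointwise

section CauchySchwarz

variable {X E : Type*} [MeasurableSpace X] {μ : Measure X}
  [NormedAddCommGroup E]

theorem MeasureTheory.Lp.norm_toLp_norm {p : ENNReal} (f : Lp E p μ) :
    ‖(Lp.memLp f).norm.toLp (fun a => ‖f a‖)‖ = ‖f‖ := by
  rw [Lp.norm_toLp, eLpNorm_norm, Lp.norm_def]

variable [NormedSpace ℝ E]

theorem MeasureTheory.L2.norm_integral_smul_le (φ : Lp ℝ 2 μ) (u : Lp E 2 μ) :
    ‖∫ a, φ a • u a ∂μ‖ ≤ ‖φ‖ * ‖u‖ := by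
  have hφ := (Lp.memLp φ).norm
  have hu := (Lp.memLp u).norm
  calc ‖∫ a, φ a • u a ∂μ‖ ≤ ∫ a, ‖φ a‖ * ‖u a‖ ∂μ :=
        (norm_integral_le_integral_norm _).trans_eq (by simp only [norm_smul])
    _ = inner ℝ (hφ.toLp _) (hu.toLp _) := by
        rw [L2.inner_def]
        refine integral_congr_ae ?_
        filter_upwards [hφ.coeFn_toLp, hu.coeFn_toLp] with a hφa hua
        rw [hφa, hua, RCLike.inner_apply, conj_trivial, mul_comm]
    _ ≤ ‖φ‖ * ‖u‖ := by
        simpa only [Lp.norm_toLp_norm] using real_inner_le_norm (hφ.toLp _) (hu.toLp _)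

theorem MeasureTheory.MemLp.norm_toLp_sq {φ : X → ℝ} (hφ : MemLp φ 2 μ) :
    ‖hφ.toLp φ‖ ^ 2 = ∫ a, φ a ^ 2 ∂μ := by
  rw [← real_inner_self_eq_norm_sq, L2.inner_def]
  refine integral_congr_ae ?_
  filter_upwards [hφ.coeFn_toLp] with a ha
  simp [ha, sq]

end CauchySchwarz

section IndicatorSums

variable {X E ι : Type*} [MeasurableSpace X] {μ : Measure X}
  [NormedAddCommGroup E] [NormedSpace ℝ E] [Fintype ι] {s : ι → Set X}

theorem integral_sum_indicator_one_smul (hs : ∀ i, MeasurableSet (s i)) {u : X → E}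
    (hu : Integrable u μ) :
    ∫ a, (∑ i, (s i).indicator (1 : X → ℝ) a) • u a ∂μ = ∑ i, ∫ a in s i, u a ∂μ := by
  have hpt : ∀ a, (∑ i, (s i).indicator (1 : X → ℝ) a) • u a = ∑ i, (s i).indicator u a := by
    intro a
    simp only [Finset.sum_smul, ← Set.indicator_smul_apply_left, Pi.one_apply, one_smul]
  simp only [hpt]
  rw [integral_finsetSum _ fun i _ => hu.indicator (hs i)]
  simp only [integral_indicator (hs _)]

theorem integral_sum_indicator_one_sq [IsFiniteMeasure μ] (hs : ∀ i, MeasurableSet (s i)) :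
    ∫ a, (∑ i, (s i).indicator (1 : X → ℝ) a) ^ 2 ∂μ = ∑ i, ∑ j, μ.real (s i ∩ s j) := by
  have hpt : ∀ a, (∑ i, (s i).indicator (1 : X → ℝ) a) ^ 2
      = ∑ i, ∑ j, (s i ∩ s j).indicator 1 a := by
    intro a
    simp only [sq, Finset.sum_mul_sum, Set.inter_indicator_one, Pi.mul_apply]
  have hint : ∀ i j, Integrable ((s i ∩ s j).indicator (1 : X → ℝ)) μ := fun i j =>
    (integrable_const 1).indicator ((hs i).inter (hs j))
  simp only [hpt]
  rw [integral_finsetSum _ fun i _ => integrable_finsetSum _ fun j _ => hint i j]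
  simp only [integral_finsetSum _ fun j _ => hint _ j, integral_indicator_one ((hs _).inter (hs _))]

end IndicatorSums

section Translates

variable {G X : Type*} [Group G] [MeasurableSpace X] [MulAction G X] {μ : Measure X}

/-- The symmetry index `γ_H(A)`; when `|H| = 1` or `μ A = 0` a division by zero makes it `0`. -/
noncomputable def symmetryIndex [DecidableEq G] (μ : Measure X) (H : Subgroup G) [Fintype H]
    (A : Set X) : ℝ :=
  (1 / ((Fintype.card H : ℝ) - 1)) *
    ∑ g ∈ Finset.univ.filter (fun g : H => (g : G) ≠ 1), μ.real (A ∩ (g : G) • A) / μ.real A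

theorem sum_measureReal_inter_smul_eq [DecidableEq G] [IsFiniteMeasure μ] (H : Subgroup G)
    [Fintype H] (A : Set X) :
    ∑ g : H, μ.real (A ∩ (g : G) • A)
      = μ.real A * (1 + ((Fintype.card H : ℝ) - 1) * symmetryIndex μ H A) := by
  have hcancel : ((Fintype.card H : ℝ) - 1) * symmetryIndex μ H A
      = ∑ g ∈ Finset.univ.filter (fun g : H => (g : G) ≠ 1),
          μ.real (A ∩ (g : G) • A) / μ.real A := by
    rw [symmetryIndex, one_div_mul_eq_div, mul_div_assoc']
    refine mul_div_cancel_left_of_imp fun hn => Finset.sum_eq_zero fun g hg => ?_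
    have : Subsingleton H :=
      Fintype.card_le_one_iff_subsingleton.mp (by exact_mod_cast (sub_eq_zero.mp hn).le)
    simp [Subsingleton.elim g 1] at hg
  have hfilter : Finset.univ.filter (fun g : H => (g : G) ≠ 1) = Finset.univ.erase 1 := by
    ext g; simp
  rw [hcancel, hfilter, mul_one_add, Finset.mul_sum,
    ← Finset.add_sum_erase _ _ (Finset.mem_univ 1)]
  congr 1
  · simp
  · refine Finset.sum_congr rfl fun g _ => ?_
    rw [mul_div_assoc', mul_div_cancel_left_of_imp]
    exact measureReal_mono_null Set.inter_subset_left

variable [SMulInvariantMeasure G X μ]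

theorem sum_measureReal_smul_inter_smul (H : Subgroup G) [Fintype H] (A : Set X) :
    ∑ g : H, ∑ g' : H, μ.real ((g : G) • A ∩ (g' : G) • A)
      = Fintype.card H * ∑ g : H, μ.real (A ∩ (g : G) • A) := by
  have hrow : ∀ g : H, ∑ g' : H, μ.real ((g : G) • A ∩ (g' : G) • A)
      = ∑ g' : H, μ.real (A ∩ (g' : G) • A) := fun g =>
    Fintype.sum_equiv (Equiv.mulLeft g⁻¹) _ _ fun g' => by
      simp [Measure.real, ← measure_inter_inv_smul μ (g : G), smul_smul]
  simp only [hrow, Finset.sum_const, Finset.card_univ, nsmul_eq_mul]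

variable [MeasurableConstSMul G X] {E : Type*} [NormedAddCommGroup E] [NormedSpace ℝ E]

theorem setIntegral_smul_set_of_ae_fixed {g : G} {u : X → E}
    (hu : (fun a => u (g⁻¹ • a)) =ᵐ[μ] u) (A : Set X) :
    ∫ a in g • A, u a ∂μ = ∫ a in A, u a ∂μ := by
  rw [← Set.preimage_smul_inv, ← (measurePreserving_smul g⁻¹ μ).setIntegral_preimage_emb
    (measurableEmbedding_const_smul g⁻¹) u A]
  exact integral_congr_ae (ae_restrict_of_ae hu.symm)

theorem norm_setIntegral_le_of_ae_fixed [IsFiniteMeasure μ] (H : Subgroup G) [Fintype H]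
    {A : Set X} (hA : MeasurableSet A) (u : Lp E 2 μ)
    (hu : ∀ g : H, (fun a => u ((g : G)⁻¹ • a)) =ᵐ[μ] u) :
    ‖∫ a in A, u a ∂μ‖ ≤ ‖u‖ * √((∑ g : H, μ.real (A ∩ (g : G) • A)) / Fintype.card H) := by
  have hs : ∀ g : H, MeasurableSet ((g : G) • A) := fun g => hA.const_smul _
  have hψ : MemLp (fun a => ∑ g : H, ((g : G) • A).indicator (1 : X → ℝ) a) 2 μ :=
    memLp_finsetSum _ fun g _ => (memLp_const (1 : ℝ)).indicator (hs g)
  set ψ : Lp ℝ 2 μ := hψ.toLp _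
  have havg : (Fintype.card H : ℝ) • ∫ a in A, u a ∂μ = ∫ a, ψ a • u a ∂μ := by
    calc (Fintype.card H : ℝ) • ∫ a in A, u a ∂μ = ∑ g : H, ∫ a in (g : G) • A, u a ∂μ := by
          simp only [setIntegral_smul_set_of_ae_fixed (hu _), Finset.sum_const, Finset.card_univ,
            Nat.cast_smul_eq_nsmul]
      _ = ∫ a, (∑ g : H, ((g : G) • A).indicator (1 : X → ℝ) a) • u a ∂μ :=
          (integral_sum_indicator_one_smul hs (Lp.memLp u |>.integrable one_le_two)).symm
      _ = ∫ a, ψ a • u a ∂μ :=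
          integral_congr_ae (hψ.coeFn_toLp.mono fun a ha => by dsimp only; rw [ha])
  have hnorm : ‖ψ‖ = √(Fintype.card H * ∑ g : H, μ.real (A ∩ (g : G) • A)) := by
    rw [← Real.sqrt_sq (norm_nonneg _), hψ.norm_toLp_sq, integral_sum_indicator_one_sq hs,
      sum_measureReal_smul_inter_smul]
  have hn : (0 : ℝ) < Fintype.card H := by exact_mod_cast Fintype.card_pos
  calc ‖∫ a in A, u a ∂μ‖ = (Fintype.card H : ℝ)⁻¹ * ‖∫ a, ψ a • u a ∂μ‖ := by
        rw [← havg, norm_smul, Real.norm_of_nonneg hn.le, inv_mul_cancel_left₀ hn.ne']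
    _ ≤ (Fintype.card H : ℝ)⁻¹ * (‖ψ‖ * ‖u‖) := by
        gcongr; exact L2.norm_integral_smul_le _ u
    _ = ‖u‖ * √((∑ g : H, μ.real (A ∩ (g : G) • A)) / Fintype.card H) := by
        have hsqrt : ∀ S : ℝ, (Fintype.card H : ℝ)⁻¹ * √(Fintype.card H * S)
            = √(S / Fintype.card H) := fun S => by
          rw [← Real.sqrt_sq (inv_nonneg.2 hn.le), ← Real.sqrt_mul (sq_nonneg _)]
          congr 1
          field_simp
        rw [hnorm, ← hsqrt]
        ring

end Translates

section Equivariance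

variable {G X F : Type*} [Group G] [MeasurableSpace X] [MulAction G X] [MeasurableConstSMul G X]
  {μ : Measure X} [SMulInvariantMeasure G X μ] [NormedAddCommGroup F] {p : ENNReal}

theorem MeasureTheory.Lp.ae_fixed_sub {g : G} {u v : Lp F p μ}
    (hu : (fun a => u (g⁻¹ • a)) =ᵐ[μ] u) (hv : (fun a => v (g⁻¹ • a)) =ᵐ[μ] v) :
    (fun a => (u - v) (g⁻¹ • a)) =ᵐ[μ] (u - v : Lp F p μ) := by
  have hsub := Lp.coeFn_sub u v
  filter_upwards [hu, hv, hsub,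
    (measurePreserving_smul g⁻¹ μ).quasiMeasurePreserving.ae_eq_comp hsub] with a hua hva hsa hsga
  calc (u - v) (g⁻¹ • a) = u (g⁻¹ • a) - v (g⁻¹ • a) := hsga
    _ = u a - v a := by rw [hua, hva]
    _ = (u - v) a := hsa.symm

end Equivariance

theorem setwise_error_bound_equivariant_operators_general
    {G : Type*} [Group G] [DecidableEq G]
    {X : Type*} [MeasurableSpace X] [MulAction G X]
    {Y : Type*} [MeasurableSpace Y] [MulAction G Y]
    {Z : Type*} [NormedAddCommGroup Z] [InnerProductSpace ℝ Z]
    (μX : Measure X) (μY : Measure Y)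
    [IsProbabilityMeasure μX]
    (hsmulX : ∀ g : G, Measurable (fun a : X => g • a))
    (hμX : ∀ g : G, μX.map (fun a : X => g • a) = μX)
    (D D' : Lp Z 2 μY →L[ℝ] Lp Z 2 μX)
    (hD : ∀ (g : G) (f f' : Lp Z 2 μY),
      (∀ᵐ b ∂μY, f' b = f (g⁻¹ • b)) →
      ∀ᵐ a ∂μX, (D f') a = (D f) (g⁻¹ • a))
    (hD' : ∀ (g : G) (f f' : Lp Z 2 μY),
      (∀ᵐ b ∂μY, f' b = f (g⁻¹ • b)) →
      ∀ᵐ a ∂μX, (D' f') a = (D' f) (g⁻¹ • a))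
    (G' : Subgroup G) [Fintype G']
    (h : Lp Z 2 μY)
    (hfix : ∀ g : G', ∀ᵐ b ∂μY, (h : Y → Z) ((g : G)⁻¹ • b) = h b)
    (A : Set X) (hA : MeasurableSet A) :
    ‖∫ a in A, ((D - D') h) a ∂μX‖
      ≤ ‖D - D'‖ * ‖h‖ * Real.sqrt (μX A).toReal *
        Real.sqrt
          ((1 + ((Fintype.card G' : ℝ) - 1) *
              ((1 / ((Fintype.card G' : ℝ) - 1)) *
                ∑ g ∈ Finset.univ.filter (fun g : G' => (g : G) ≠ 1),
                  (μX (A ∩ (g : G) • A)).toReal / (μX A).toReal))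
            / (Fintype.card G' : ℝ)) := by
  have : MeasurableConstSMul G X := ⟨hsmulX⟩
  have : SMulInvariantMeasure G X μX := ((smulInvariantMeasure_tfae G μX).out 0 5).2 hμX
  have hfixD : ∀ g : G', (fun a => (D - D') h ((g : G)⁻¹ • a)) =ᵐ[μX] (D - D') h := fun g => by
    have hh : ∀ᵐ b ∂μY, h b = h ((g : G)⁻¹ • b) := (hfix g).mono fun _ => Eq.symm
    rw [sub_apply]
    exact Lp.ae_fixed_sub ((hD g h h hh).mono fun _ => Eq.symm)
      ((hD' g h h hh).mono fun _ => Eq.symm)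
  calc ‖∫ a in A, ((D - D') h) a ∂μX‖
      ≤ ‖(D - D') h‖ * √((∑ g : G', μX.real (A ∩ (g : G) • A)) / Fintype.card G') :=
        norm_setIntegral_le_of_ae_fixed G' hA _ hfixD
    _ ≤ ‖D - D'‖ * ‖h‖ * √((∑ g : G', μX.real (A ∩ (g : G) • A)) / Fintype.card G') := by
        gcongr; exact (D - D').le_opNorm h
    _ = _ := by
        rw [sum_measureReal_inter_smul_eq, mul_div_assoc, Real.sqrt_mul measureReal_nonneg,
          ← mul_assoc]
        rfl

/-- For bounded `G`-equivariant operators `D, D̂` between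
vector-valued `L²` spaces over `G`-invariant probability measures, and `h`
fixed by the action of a subgroup `G'`, the set-restricted mean of
`(D − D̂)h` is controlled by the operator-norm error, `‖h‖`, `√(μX A)` and the
symmetry index of `A`. -/
theorem setwise_error_bound_equivariant_operators
    {G : Type*} [Group G] [Fintype G] [DecidableEq G]
    {X : Type*} [MeasurableSpace X] [MulAction G X]
    {Y : Type*} [MeasurableSpace Y] [MulAction G Y]
    {Z : Type*} [NormedAddCommGroup Z] [InnerProductSpace ℝ Z] [CompleteSpace Z]
    (μX : Measure X) (μY : Measure Y)
    [IsProbabilityMeasure μX] [IsProbabilityMeasure μY]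
    (hsmulX : ∀ g : G, Measurable (fun a : X => g • a))
    (hsmulY : ∀ g : G, Measurable (fun b : Y => g • b))
    (hμX : ∀ g : G, μX.map (fun a : X => g • a) = μX)
    (hμY : ∀ g : G, μY.map (fun b : Y => g • b) = μY)
    (D D' : Lp Z 2 μY →L[ℝ] Lp Z 2 μX)
    (hD : ∀ (g : G) (f f' : Lp Z 2 μY),
      (∀ᵐ b ∂μY, f' b = f (g⁻¹ • b)) →
      ∀ᵐ a ∂μX, (D f') a = (D f) (g⁻¹ • a))
    (hD' : ∀ (g : G) (f f' : Lp Z 2 μY),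
      (∀ᵐ b ∂μY, f' b = f (g⁻¹ • b)) →
      ∀ᵐ a ∂μX, (D' f') a = (D' f) (g⁻¹ • a))
    (G' : Subgroup G) [Fintype G']
    (h : Lp Z 2 μY)
    (hfix : ∀ g : G', ∀ᵐ b ∂μY, (h : Y → Z) ((g : G)⁻¹ • b) = h b)
    (A : Set X) (hA : MeasurableSet A) (hApos : 0 < (μX A).toReal) :
    ‖∫ a in A, ((D - D') h) a ∂μX‖
      ≤ ‖D - D'‖ * ‖h‖ * Real.sqrt (μX A).toReal *
        Real.sqrt
          ((1 + ((Fintype.card G' : ℝ) - 1) *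
              ((1 / ((Fintype.card G' : ℝ) - 1)) *
                ∑ g ∈ Finset.univ.filter (fun g : G' => (g : G) ≠ 1),
                  (μX (A ∩ (g : G) • A)).toReal / (μX A).toReal))
            / (Fintype.card G' : ℝ)) :=
  setwise_error_bound_equivariant_operators_general μX μY hsmulX hμX D D' hD hD' G' h hfix A hA
end

section
/- Let x_1, …, x_N be i.i.d. random variables on X whose common law is invariant under a finite group G', and let A ⊆ X be measurable such that g·A ∩ A = ∅ for all g ∈ G' \ {e} and p := P(x ∈ ∪_{g∈G'} g·A) > 0. Define the group-averaged empirical estimator p̂ = (1/(|G'| N)) Σ_{i=1}^N Σ_{g∈G'} 1_A(g·x_i). Then E[p̂] = P(x ∈ A) = p/|G'| and Var(p̂) = p(1−p)/(|G'|² N). -/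
/-!
Summing `1_A(g • y)` over `g` gives `1_B(y)` with `B = ⋃ g, g • A`, because the translates are
disjoint. So `p̂` is `1 / (|G'| N)` times a sum of `N` i.i.d. Bernoulli(`p`) variables, whose mean
`N p` and variance `N p (1 - p)` give the result, while invariance and disjointness give
`ν B = |G'| ν A`.
-/

open MeasureTheory Pointwise ProbabilityTheory Function

section Translates

variable {G α : Type*} [Group G] [MulAction G α] {A : Set α}

theorem pairwise_disjoint_smul_set_of_smul_inter_eq_empty
    (hdisj : ∀ g : G, g ≠ 1 → g • A ∩ A = ∅) :
    Pairwise (Disjoint on fun g : G => g • A) := by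
  intro a b hab
  have h : (b⁻¹ * a) • A ∩ A = ∅ := hdisj _ (by rwa [Ne, inv_mul_eq_one, eq_comm])
  rw [Function.onFun, Set.disjoint_iff_inter_eq_empty]
  simpa [Set.smul_set_inter, smul_smul] using congrArg (b • ·) h

theorem sum_indicator_smul_eq_indicator_iUnion [Fintype G] {M : Type*} [AddCommMonoid M]
    (hdisj : Pairwise (Disjoint on fun g : G => g • A)) (c : M) (y : α) :
    ∑ g : G, A.indicator (fun _ => c) (g • y) = (⋃ g : G, g • A).indicator (fun _ => c) y := by
  calc ∑ g : G, A.indicator (fun _ => c) (g • y)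
      = ∑ g : G, (g⁻¹ • A).indicator (fun _ => c) y := by
        simp only [← Set.preimage_smul, ← Set.indicator_comp_right]; rfl
    _ = ∑ g : G, (g • A).indicator (fun _ => c) y :=
        Fintype.sum_equiv (Equiv.inv G) _ _ fun _ => rfl
    _ = (⋃ g : G, g • A).indicator (fun _ => c) y := by
        simpa using (Finset.indicator_biUnion_apply Finset.univ (fun g : G => g • A)
          (hdisj.set_pairwise _) y).symm

theorem measure_iUnion_smul_set [Fintype G] [MeasurableSpace α] [MeasurableConstSMul G α]
    (μ : Measure α) [SMulInvariantMeasure G α μ]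
    (hdisj : Pairwise (Disjoint on fun g : G => g • A)) (hA : MeasurableSet A) :
    μ (⋃ g : G, g • A) = Fintype.card G * μ A := by
  rw [measure_iUnion hdisj fun g => hA.const_smul g, tsum_fintype]
  simp [measure_smul]

end Translates

theorem variance_indicator_one {Ω : Type*} [MeasurableSpace Ω] (μ : Measure Ω)
    [IsProbabilityMeasure μ] {s : Set Ω} (hs : MeasurableSet s) :
    variance (s.indicator fun _ => (1 : ℝ)) μ = μ.real s * (1 - μ.real s) := by
  have hsq : (s.indicator fun _ => (1 : ℝ)) ^ 2 = s.indicator fun _ => 1 := by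
    ext ω; by_cases h : ω ∈ s <;> simp [h]
  rw [variance_eq_sub (memLp_indicator_const 2 hs 1 (Or.inr (measure_ne_top μ s))), hsq,
    integral_indicator_const 1 hs, smul_eq_mul, mul_one]
  ring

theorem Set.indicator_const_comp {α β M : Type*} [Zero M] (s : Set β) (f : α → β) (c : M) :
    (fun a => s.indicator (fun _ => c) (f a)) = (f ⁻¹' s).indicator fun _ => c :=
  funext fun _ => (Set.indicator_comp_right f).symm

section IIDIndicator

variable {Ω X ι : Type*} [MeasurableSpace Ω] [MeasurableSpace X] [Fintype ι]
  {P : Measure Ω} [IsProbabilityMeasure P] {ν : Measure X} {x : ι → Ω → X} {B : Set X}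

theorem integral_sum_indicator_one_comp
    (hx : ∀ i, MeasurePreserving (x i) P ν) (hB : MeasurableSet B) :
    ∫ ω, ∑ i, B.indicator (fun _ => (1 : ℝ)) (x i ω) ∂P = Fintype.card ι * ν.real B := by
  have hmB : ∀ i, MeasurableSet (x i ⁻¹' B) := fun i => (hx i).measurable hB
  rw [integral_finsetSum _ fun i _ => by
    rw [Set.indicator_const_comp]; exact (integrable_const 1).indicator (hmB i)]
  simp [Set.indicator_const_comp, integral_indicator_const _ (hmB _),
    (hx _).measureReal_preimage hB.nullMeasurableSet]

theorem variance_sum_indicator_one_comp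
    (hx : ∀ i, MeasurePreserving (x i) P ν) (hindep : iIndepFun x P) (hB : MeasurableSet B) :
    variance (fun ω => ∑ i, B.indicator (fun _ => (1 : ℝ)) (x i ω)) P
      = Fintype.card ι * (ν.real B * (1 - ν.real B)) := by
  have hmB : ∀ i, MeasurableSet (x i ⁻¹' B) := fun i => (hx i).measurable hB
  have hsum : (fun ω => ∑ i, B.indicator (fun _ => (1 : ℝ)) (x i ω))
      = ∑ i, (x i ⁻¹' B).indicator fun _ => 1 := by
    ext ω; simp [← Set.indicator_const_comp]
  have hindep' : Pairwise fun i j => IndepFun ((x i ⁻¹' B).indicator fun _ => (1 : ℝ))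
      ((x j ⁻¹' B).indicator fun _ => (1 : ℝ)) P := by
    intro i j hij
    simpa only [← Set.indicator_const_comp, comp_def] using
      (hindep.indepFun hij).comp (measurable_const.indicator hB) (measurable_const.indicator hB)
  rw [hsum, IndepFun.variance_sum
    (fun i _ => memLp_indicator_const 2 (hmB i) 1 (Or.inr (measure_ne_top P _)))
    (hindep'.set_pairwise _)]
  simp [variance_indicator_one P (hmB _), (hx _).measureReal_preimage hB.nullMeasurableSet]

end IIDIndicator

theorem group_averaged_empirical_estimator_general
    {G' : Type*} [Group G'] [Fintype G']
    {X : Type*} [MeasurableSpace X] [MulAction G' X]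
    {Ω : Type*} [MeasurableSpace Ω]
    (P : Measure Ω) [IsProbabilityMeasure P]
    {N : ℕ} (hN : 0 < N)
    (x : Fin N → Ω → X)
    (hmeas : ∀ i, Measurable (x i))
    (hindep : iIndepFun x P)
    (ν : Measure X) [IsProbabilityMeasure ν]
    (hid : ∀ i, P.map (x i) = ν)
    (hsmul : ∀ g : G', Measurable (fun a : X => g • a))
    (hν : ∀ g : G', ν.map (fun a : X => g • a) = ν)
    (A : Set X) (hA : MeasurableSet A)
    (hdisj : ∀ g : G', g ≠ 1 → g • A ∩ A = ∅) :
    let n : ℝ := Fintype.card G'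
    let p : ℝ := (ν (⋃ g : G', g • A)).toReal
    let phat : Ω → ℝ := fun ω =>
      (1 / (n * N)) * ∑ i : Fin N, ∑ g : G',
        A.indicator (fun _ => (1 : ℝ)) (g • x i ω)
    (∫ ω, phat ω ∂P = (ν A).toReal)
    ∧ (ν A).toReal = p / n
    ∧ variance phat P = p * (1 - p) / (n ^ 2 * N) := by
  have : MeasurableConstSMul G' X := ⟨hsmul⟩
  have : SMulInvariantMeasure G' X ν := ((smulInvariantMeasure_tfae G' ν).out 5 0).mp hν
  have hdisjoint := pairwise_disjoint_smul_set_of_smul_inter_eq_empty hdisj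
  set B := ⋃ g : G', g • A
  intro n p phat
  have hB : MeasurableSet B := .iUnion fun g => hA.const_smul g
  have hx : ∀ i, MeasurePreserving (x i) P ν := fun i => ⟨hmeas i, hid i⟩
  have hphat : phat = fun ω => 1 / (n * N) * ∑ i, B.indicator (fun _ => (1 : ℝ)) (x i ω) := by
    simp only [phat, sum_indicator_smul_eq_indicator_iUnion hdisjoint]; rfl
  have hνB : ν.real B = p := rfl
  have hνA : (ν A).toReal = p / n := by
    simp only [p, B, measure_iUnion_smul_set ν hdisjoint hA, ENNReal.toReal_mul]
    simp [n]
  refine ⟨?_, hνA, ?_⟩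
  · rw [hphat, integral_const_mul, integral_sum_indicator_one_comp hx hB, Fintype.card_fin, hνB,
      hνA]
    field_simp
  · rw [hphat, variance_const_mul, variance_sum_indicator_one_comp hx hindep hB, Fintype.card_fin,
      hνB]
    field_simp

/-- For an i.i.d. sample with `G'`-invariant common law and a
set `A` whose translates are pairwise disjoint, the group-averaged empirical
estimator `p̂ = (1/(|G'| N)) ∑_i ∑_g 1_A(g • x_i)` is unbiased for `P(x ∈ A)`
(which equals `p/|G'|` with `p = P(x ∈ ∪_g g•A)`) and
`Var(p̂) = p(1−p)/(|G'|² N)`. -/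
theorem group_averaged_empirical_estimator
    {G' : Type*} [Group G'] [Fintype G']
    {X : Type*} [MeasurableSpace X] [MulAction G' X]
    {Ω : Type*} [MeasurableSpace Ω]
    (P : Measure Ω) [IsProbabilityMeasure P]
    {N : ℕ} (hN : 0 < N)
    (x : Fin N → Ω → X)
    (hmeas : ∀ i, Measurable (x i))
    (hindep : iIndepFun x P)
    (ν : Measure X) [IsProbabilityMeasure ν]
    (hid : ∀ i, P.map (x i) = ν)
    (hsmul : ∀ g : G', Measurable (fun a : X => g • a))
    (hν : ∀ g : G', ν.map (fun a : X => g • a) = ν)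
    (A : Set X) (hA : MeasurableSet A)
    (hdisj : ∀ g : G', g ≠ 1 → g • A ∩ A = ∅)
    (hp : 0 < (ν (⋃ g : G', g • A)).toReal) :
    let n : ℝ := Fintype.card G'
    let p : ℝ := (ν (⋃ g : G', g • A)).toReal
    let phat : Ω → ℝ := fun ω =>
      (1 / (n * N)) * ∑ i : Fin N, ∑ g : G',
        A.indicator (fun _ => (1 : ℝ)) (g • x i ω)
    (∫ ω, phat ω ∂P = (ν A).toReal)
    ∧ (ν A).toReal = p / n
    ∧ variance phat P = p * (1 - p) / (n ^ 2 * N) :=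
  group_averaged_empirical_estimator_general P hN x hmeas hindep ν hid hsmul hν A hA hdisj
end
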